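/- arXiv:2204.13407 — 2 statements merged into one kernel-verified Lean document; each statement's English description precedes it below -/
import Mathlib

section
/- Let H₁, H₂ be inner product spaces over ℂ and let (Ψ_k)_{k∈ℕ}, (Ψ'_k)_{k∈ℕ} be C-sequences (i.e. ∏_k ‖Ψ_k‖ and ∏_k ‖Ψ'_k‖ converge) in a family of Hilbert spaces (ℋ_k). Suppose for every k there exists c_k ∈ ℂ with Ψ_k = c_k Ψ'_k and ∏_{k∈ℕ} c_k = 1. Then for every C-sequence (Φ_k), the products ∏_k ⟨Ψ_k, Φ_k⟩ and ∏_k ⟨Ψ'_k, Φ_k⟩ are equal (whenever they converge), i.e. the two sequences define the same conjugate-linear functional on C-sequences. -/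
open Filter

/-- If two C-sequences `(Ψ_k)`, `(Ψ'_k)` differ by scalars `c_k` with
`∏ c_k = 1`, then they induce the same conjugate-linear functional on
C-sequences: for every C-sequence `(Φ_k)`, the (convergent) products
`∏ ⟨Ψ_k, Φ_k⟩` and `∏ ⟨Ψ'_k, Φ_k⟩` agree. -/
theorem stmt_7 {H : ℕ → Type*} [∀ k, NormedAddCommGroup (H k)]
    [∀ k, InnerProductSpace ℂ (H k)]
    (Ψ Ψ' Φ : ∀ k, H k) (c : ℕ → ℂ)
    (hΨC : ∃ L : ℝ, Tendsto (fun n => ∏ k ∈ Finset.range n, ‖Ψ k‖) atTop (nhds L))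
    (hΨ'C : ∃ L : ℝ, Tendsto (fun n => ∏ k ∈ Finset.range n, ‖Ψ' k‖) atTop (nhds L))
    (hΦC : ∃ L : ℝ, Tendsto (fun n => ∏ k ∈ Finset.range n, ‖Φ k‖) atTop (nhds L))
    (hc : ∀ k, Ψ k = c k • Ψ' k)
    (hprod : Tendsto (fun n => ∏ k ∈ Finset.range n, c k) atTop (nhds 1))
    (P P' : ℂ)
    (hP : Tendsto (fun n => ∏ k ∈ Finset.range n, (inner ℂ (Ψ k) (Φ k) : ℂ))
      atTop (nhds P))
    (hP' : Tendsto (fun n => ∏ k ∈ Finset.range n, (inner ℂ (Ψ' k) (Φ k) : ℂ))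
      atTop (nhds P')) :
    P = P' := by
  have heq : ∀ n, (∏ k ∈ Finset.range n, (inner ℂ (Ψ k) (Φ k) : ℂ))
      = (starRingEnd ℂ) (∏ k ∈ Finset.range n, c k) *
        ∏ k ∈ Finset.range n, (inner ℂ (Ψ' k) (Φ k) : ℂ) := by
    intro n
    rw [map_prod, ← Finset.prod_mul_distrib]
    refine Finset.prod_congr rfl fun k _ => ?_
    rw [hc k, inner_smul_left]
  have h2 : Tendsto (fun n => (starRingEnd ℂ) (∏ k ∈ Finset.range n, c k) *
      ∏ k ∈ Finset.range n, (inner ℂ (Ψ' k) (Φ k) : ℂ)) atTop (nhds ((starRingEnd ℂ) 1 * P')) :=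
    ((Complex.continuous_conj.tendsto 1).comp hprod).mul hP'
  rw [map_one, one_mul] at h2
  have := (hP.congr' (Filter.Eventually.of_forall heq))
  exact tendsto_nhds_unique this h2
end

section
/- For p ∈ ℤ³ with |p| large, let κ > 0 be fixed, m > 0, and define G_p = κ/(κ + √(|p|² + m²)) and v_p² = G_p²·(1 + √(1−G_p²)) / (2√(1−G_p²)·(1+√(1−G_p²))²). Then ∑_{p ∈ ℤ³} v_p² = ∞. In particular there exist constants c > 0 and R such that v_p² ≥ c/|p|² for all |p| > R, and ∑_{p∈ℤ³, |p|>R} 1/|p|² diverges. -/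
/-- Euclidean norm of a lattice point `p ∈ ℤ³`. -/
noncomputable def latNorm (p : Fin 3 → ℤ) : ℝ :=
  Real.sqrt (∑ i, ((p i : ℝ)) ^ 2)

/-- `G_p = κ/(κ + √(|p|² + m²))`. -/
noncomputable def Gcoef (κ m : ℝ) (p : Fin 3 → ℤ) : ℝ :=
  κ / (κ + Real.sqrt ((latNorm p) ^ 2 + m ^ 2))

/-- `v_p² = G_p²(1 + √(1−G_p²)) / (2√(1−G_p²)(1+√(1−G_p²))²)`. -/
noncomputable def vsq (κ m : ℝ) (p : Fin 3 → ℤ) : ℝ :=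
  (Gcoef κ m p) ^ 2 * (1 + Real.sqrt (1 - (Gcoef κ m p) ^ 2)) /
    (2 * Real.sqrt (1 - (Gcoef κ m p) ^ 2) *
      (1 + Real.sqrt (1 - (Gcoef κ m p) ^ 2)) ^ 2)

lemma latNorm_nonneg (p : Fin 3 → ℤ) : 0 ≤ latNorm p := Real.sqrt_nonneg _

lemma sq_latNorm (p : Fin 3 → ℤ) : latNorm p ^ 2 = ∑ i, ((p i : ℝ)) ^ 2 :=
  Real.sq_sqrt (by positivity)

lemma coord_le_latNorm (p : Fin 3 → ℤ) (i : Fin 3) : |(p i : ℝ)| ≤ latNorm p := by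
  rw [← Real.sqrt_sq_eq_abs]
  apply Real.sqrt_le_sqrt
  exact Finset.single_le_sum (f := fun j => ((p j : ℝ))^2) (fun j _ => by positivity) (Finset.mem_univ i)

lemma vsq_nonneg (κ m : ℝ) (p : Fin 3 → ℤ) : 0 ≤ vsq κ m p := by
  unfold vsq
  have h1 : 0 ≤ Real.sqrt (1 - (Gcoef κ m p) ^ 2) := Real.sqrt_nonneg _
  positivity

lemma vsq_lower (κ m : ℝ) (hκ : 0 < κ) (hm : 0 < m) (p : Fin 3 → ℤ)
    (hp : κ + m < latNorm p) :
    κ ^ 2 / 32 / (latNorm p) ^ 2 ≤ vsq κ m p := by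
  set L := latNorm p with hLdef
  have hL : 0 < L := lt_trans (by linarith) hp
  set E := Real.sqrt (L ^ 2 + m ^ 2) with hEdef
  have hE0 : 0 < E := Real.sqrt_pos.2 (by positivity)
  have hEle : E ≤ L + m := by
    rw [hEdef, show L + m = Real.sqrt ((L + m) ^ 2) from (Real.sqrt_sq (by positivity)).symm]
    exact Real.sqrt_le_sqrt (by nlinarith)
  have hGdef : Gcoef κ m p = κ / (κ + E) := rfl
  set G := Gcoef κ m p with hG
  have hG0 : 0 < G := by rw [hGdef]; exact div_pos hκ (by linarith)
  have hG1 : G < 1 := by rw [hGdef]; exact (div_lt_one (by linarith)).2 (by linarith)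
  set s := Real.sqrt (1 - G ^ 2) with hsdef
  have hs0 : 0 < s := Real.sqrt_pos.2 (by nlinarith)
  have hs1 : s ≤ 1 := Real.sqrt_le_one.2 (by nlinarith)
  have hvsq : vsq κ m p = G ^ 2 * (1 + s) / (2 * s * (1 + s) ^ 2) := rfl
  -- denominator bound
  have hD : 2 * s * (1 + s) ^ 2 ≤ 8 := by nlinarith
  have hD0 : 0 < 2 * s * (1 + s) ^ 2 := by positivity
  have step1 : G ^ 2 * (1 + s) / 8 ≤ vsq κ m p := by
    rw [hvsq]
    exact div_le_div_of_nonneg_left (by positivity) hD0 hD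
  have step2 : G ^ 2 / 8 ≤ G ^ 2 * (1 + s) / 8 := by nlinarith
  -- G lower bound
  have hGlow : κ / (2 * L) ≤ G := by
    rw [hGdef]
    exact div_le_div_of_nonneg_left (le_of_lt hκ) (by linarith) (by linarith)
  have hGsq : κ ^ 2 / (4 * L ^ 2) ≤ G ^ 2 := by
    have h := mul_le_mul hGlow hGlow (by positivity) (le_of_lt hG0)
    calc κ ^ 2 / (4 * L ^ 2) = (κ / (2 * L)) * (κ / (2 * L)) := by
          field_simp; ring
      _ ≤ G * G := h
      _ = G ^ 2 := (sq G).symm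
  calc κ ^ 2 / 32 / L ^ 2 = (κ ^ 2 / (4 * L ^ 2)) / 8 := by
        field_simp; ring
    _ ≤ G ^ 2 / 8 := by linarith
    _ ≤ G ^ 2 * (1 + s) / 8 := step2
    _ ≤ vsq κ m p := step1

lemma not_summable_inv_sq (R : ℝ) :
    ¬ Summable (fun p : Fin 3 → ℤ =>
      if R < latNorm p then 1 / (latNorm p) ^ 2 else 0) := by
  intro h
  set f : (Fin 3 → ℤ) → ℝ :=
    fun p => if R < latNorm p then 1 / (latNorm p) ^ 2 else 0 with hf
  have hf0 : ∀ p, 0 ≤ f p := by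
    intro p; rw [hf]; dsimp only; split
    · positivity
    · exact le_refl 0
  set S : ℝ := ∑' p, f p with hS
  set M : ℤ := max ⌈R⌉ 0 with hM
  have hMR : R ≤ (M : ℝ) := le_trans (Int.le_ceil R) (by exact_mod_cast le_max_left ⌈R⌉ 0)
  have hM0 : 0 ≤ M := le_max_right _ _
  set N : ℕ := M.toNat + (⌈12 * S⌉).toNat + 1 with hN
  have hMN : M < (N : ℤ) := by
    have : M.toNat < N := by omega
    omega
  have hSN : 12 * S < (N : ℝ) := by
    have h1 : (12 * S : ℝ) ≤ ((⌈12 * S⌉).toNat : ℝ) := by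
      calc (12 * S : ℝ) ≤ (⌈12 * S⌉ : ℝ) := Int.le_ceil _
        _ ≤ ((⌈12 * S⌉).toNat : ℝ) := by exact_mod_cast Int.self_le_toNat _
    have h2 : ((⌈12 * S⌉).toNat : ℝ) < (N : ℝ) := by
      have : (⌈12 * S⌉).toNat < N := by omega
      exact_mod_cast this
    linarith
  set F : Finset (Fin 3 → ℤ) :=
    Fintype.piFinset (fun _ : Fin 3 => Finset.Icc (M + 1) (M + N)) with hF
  have hcard : F.card = N ^ 3 := by
    rw [hF, Fintype.card_piFinset]
    simp [Int.card_Icc]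
  have key : ∀ p ∈ F, 1 / (12 * (N : ℝ) ^ 2) ≤ f p := by
    intro p hp
    rw [hF, Fintype.mem_piFinset] at hp
    have hbd : ∀ i, M + 1 ≤ p i ∧ p i ≤ M + N := by
      intro i; exact Finset.mem_Icc.1 (hp i)
    have h1 : ((M : ℝ) + 1) ≤ (p 0 : ℝ) := by exact_mod_cast (hbd 0).1
    have h2 : (p 0 : ℝ) ≤ |(p 0 : ℝ)| := le_abs_self _
    have h3 := coord_le_latNorm p 0
    have hM0' : (0 : ℝ) ≤ M := by exact_mod_cast hM0
    have hRp : R < latNorm p := by linarith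
    have hLpos : 0 < latNorm p := by linarith
    have hsq : latNorm p ^ 2 ≤ 12 * (N : ℝ) ^ 2 := by
      rw [sq_latNorm]
      have hb : ∀ i, ((p i : ℝ)) ^ 2 ≤ ((M : ℝ) + N) ^ 2 := by
        intro i
        have h1 : ((M : ℝ) + 1) ≤ (p i : ℝ) := by exact_mod_cast (hbd i).1
        have h2 : (p i : ℝ) ≤ (M : ℝ) + N := by exact_mod_cast (hbd i).2
        have h0 : (0 : ℝ) ≤ M := by exact_mod_cast hM0
        nlinarith
      have hMN' : (M : ℝ) + N ≤ 2 * N := by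
        have : (M : ℝ) < N := by exact_mod_cast hMN
        linarith
      have h0 : (0 : ℝ) ≤ (M : ℝ) + N := by
        have : (0 : ℝ) ≤ M := by exact_mod_cast hM0
        positivity
      calc ∑ i, ((p i : ℝ)) ^ 2 ≤ ∑ _i : Fin 3, ((M : ℝ) + N) ^ 2 :=
            Finset.sum_le_sum (fun i _ => hb i)
        _ = 3 * ((M : ℝ) + N) ^ 2 := by rw [Finset.sum_const]; norm_num
        _ ≤ 12 * (N : ℝ) ^ 2 := by nlinarith
    have : f p = 1 / (latNorm p) ^ 2 := by rw [hf]; simp [hRp]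
    rw [this]
    exact one_div_le_one_div_of_le (by positivity) hsq
  have hsum_le : (F.card : ℝ) * (1 / (12 * (N : ℝ) ^ 2)) ≤ ∑ p ∈ F, f p := by
    have := Finset.card_nsmul_le_sum F f (1 / (12 * (N : ℝ) ^ 2)) key
    simpa [nsmul_eq_mul] using this
  have htsum : ∑ p ∈ F, f p ≤ S := Summable.sum_le_tsum F (fun p _ => hf0 p) h
  have hNpos : 0 < (N : ℝ) := by positivity
  have hfinal : (N : ℝ) / 12 ≤ S := by
    have hc : (F.card : ℝ) = (N : ℝ) ^ 3 := by rw [hcard]; push_cast; ring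
    have : (N : ℝ) ^ 3 * (1 / (12 * (N : ℝ) ^ 2)) = (N : ℝ) / 12 := by
      field_simp
    rw [hc, this] at hsum_le
    linarith
  linarith


/-- Failure of the Shale–Stinespring condition: `∑_{p ∈ ℤ³} v_p² = ∞`; there
are `c > 0` and `R` with `v_p² ≥ c/|p|²` for `|p| > R`, and
`∑_{|p| > R} 1/|p|²` diverges. -/
theorem stmt_14 (κ m : ℝ) (hκ : 0 < κ) (hm : 0 < m) :
    ¬ Summable (vsq κ m) ∧
    (∃ c > (0 : ℝ), ∃ R : ℝ, ∀ p : Fin 3 → ℤ, R < latNorm p →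
      c / (latNorm p) ^ 2 ≤ vsq κ m p) ∧
    ∀ R : ℝ, ¬ Summable (fun p : Fin 3 → ℤ =>
      if R < latNorm p then 1 / (latNorm p) ^ 2 else 0) := by
  refine ⟨?_, ⟨κ ^ 2 / 32, by positivity, κ + m, fun p hp => vsq_lower κ m hκ hm p hp⟩,
    fun R => not_summable_inv_sq R⟩
  intro hsum
  have hc : (0 : ℝ) < κ ^ 2 / 32 := by positivity
  have h1 : Summable (fun p : Fin 3 → ℤ =>
      if κ + m < latNorm p then κ ^ 2 / 32 / (latNorm p) ^ 2 else 0) := by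
    apply Summable.of_nonneg_of_le _ _ hsum
    · intro p; split
      · have hL : 0 < latNorm p := by
          have : 0 < κ + m := by linarith
          linarith
        positivity
      · exact le_refl 0
    · intro p; split
      · exact vsq_lower κ m hκ hm p (by assumption)
      · exact vsq_nonneg κ m p
  have h2 : Summable (fun p : Fin 3 → ℤ =>
      if κ + m < latNorm p then 1 / (latNorm p) ^ 2 else 0) := by
    have := h1.mul_left (32 / κ ^ 2)
    refine this.congr (fun p => ?_)
    symm
    split
    · field_simp
    · simp
  exact not_summable_inv_sq (κ + m) h2
end
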